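/- arXiv:1201.5215 — 8 statements merged into one kernel-verified Lean document; each statement's English description precedes it below -/
import Mathlib

section
/- Let M be a real hypersurface of a complex plane M₂(c) with c ≠ 0, with almost contact metric structure (φ, ξ, η, g), shape operator A, and structure Jacobi operator l = R(·, ξ)ξ given by the Gauss equation lX = (c/4)(X − η(X)ξ) + g(Aξ,ξ)AX − g(AX,ξ)Aξ. Suppose Aξ = βU with U a unit vector field in ker(η) (i.e. the function α = g(Aξ,ξ) vanishes) and that φl = lφ on ker(η). Then β = 0, i.e. Aξ = 0. -/
open RealInnerProductSpace

/-!
With `α = ⟪Aξ, ξ⟫ = 0` and `⟪AX, ξ⟫ = β ⟪X, U⟫`, the Gauss formula gives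
`lX = (c/4) X - β² ⟪X, U⟫ U` on `ker η`. So `lU = (c/4 - β²) U` while `l(φU) = (c/4) φU`
(as `φU ⊥ U`), and commuting `φ` with `l` at `U` leaves `β² φU = 0`; since `φU` is a unit
vector, `β = 0`.
-/

section

variable {V : Type*} [NormedAddCommGroup V] [InnerProductSpace ℝ V]

lemma inner_apply_self_eq_zero_of_skew {φ : V →ₗ[ℝ] V}
    (hφskew : ∀ X Y : V, ⟪X, φ Y⟫ = -⟪φ X, Y⟫) (X : V) : ⟪φ X, X⟫ = 0 := by
  have h := hφskew X X
  rw [real_inner_comm] at h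
  linarith

lemma jacobi_apply_of_inner_eq_zero {A : V →ₗ[ℝ] V} {l : V → V} {ξ U : V} {c β : ℝ}
    (hUξ : ⟪U, ξ⟫ = 0) (hAsym : ∀ X Y : V, ⟪A X, Y⟫ = ⟪X, A Y⟫)
    (hl : ∀ X : V, l X = (c/4) • (X - ⟪X, ξ⟫ • ξ)
        + ⟪A ξ, ξ⟫ • A X - ⟪A X, ξ⟫ • A ξ)
    (hAξ : A ξ = β • U) {X : V} (hX : ⟪X, ξ⟫ = 0) :
    l X = (c/4) • X - (β ^ 2 * ⟪X, U⟫) • U := by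
  have hα : ⟪A ξ, ξ⟫ = 0 := by rw [hAξ, real_inner_smul_left, hUξ, mul_zero]
  have hAXξ : ⟪A X, ξ⟫ = β * ⟪X, U⟫ := by rw [hAsym, hAξ, real_inner_smul_right]
  rw [hl, hX, hα, hAXξ, hAξ, smul_smul]
  module

end

theorem stmt_0_general {V : Type*} [NormedAddCommGroup V] [InnerProductSpace ℝ V]
    (φ A : V →ₗ[ℝ] V) (l : V → V) (ξ U : V) (c β : ℝ)
    (hU : ⟪U, U⟫ = 1) (hUξ : ⟪U, ξ⟫ = 0)
    (hAsym : ∀ X Y : V, ⟪A X, Y⟫ = ⟪X, A Y⟫)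
    (hφskew : ∀ X Y : V, ⟪X, φ Y⟫ = -⟪φ X, Y⟫)
    (hηφ : ∀ X : V, ⟪φ X, ξ⟫ = 0)
    (hφiso : ∀ X Y : V, ⟪φ X, φ Y⟫ = ⟪X, Y⟫ - ⟪X, ξ⟫ * ⟪Y, ξ⟫)
    (hl : ∀ X : V, l X = (c/4) • (X - ⟪X, ξ⟫ • ξ)
        + ⟪A ξ, ξ⟫ • A X - ⟪A X, ξ⟫ • A ξ)
    (hAξ : A ξ = β • U)
    (hcomm : ∀ X : V, ⟪X, ξ⟫ = 0 → φ (l X) = l (φ X)) :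
    β = 0 := by
  have hφU : φ U ≠ 0 := by
    intro h
    have := hφiso U U
    rw [h, hU, hUξ, inner_zero_left] at this
    norm_num at this
  have hcommU := hcomm U hUξ
  rw [jacobi_apply_of_inner_eq_zero hUξ hAsym hl hAξ hUξ,
    jacobi_apply_of_inner_eq_zero hUξ hAsym hl hAξ (hηφ U),
    inner_apply_self_eq_zero_of_skew hφskew, hU] at hcommU
  have hβφU : β ^ 2 • φ U = 0 := by
    rw [map_sub, map_smul, map_smul] at hcommU
    linear_combination (norm := module) -hcommU
  exact pow_eq_zero_iff two_ne_zero |>.mp ((smul_eq_zero.mp hβφU).resolve_right hφU)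

/-- If on a real hypersurface of M₂(c), c ≠ 0, we have Aξ = βU
(U unit in ker η, so α = g(Aξ,ξ) = 0) and φl = lφ on ker(η), then β = 0. -/
theorem stmt_0 {V : Type*} [NormedAddCommGroup V] [InnerProductSpace ℝ V]
    (φ A : V →ₗ[ℝ] V) (l : V → V) (ξ U : V) (c β : ℝ)
    (hc : c ≠ 0)
    (hξ : ⟪ξ, ξ⟫ = 1) (hU : ⟪U, U⟫ = 1) (hUξ : ⟪U, ξ⟫ = 0)
    (hAsym : ∀ X Y : V, ⟪A X, Y⟫ = ⟪X, A Y⟫)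
    (hφskew : ∀ X Y : V, ⟪X, φ Y⟫ = -⟪φ X, Y⟫)
    (hφξ : φ ξ = 0)
    (hηφ : ∀ X : V, ⟪φ X, ξ⟫ = 0)
    (hφ2 : ∀ X : V, φ (φ X) = -X + ⟪X, ξ⟫ • ξ)
    (hφiso : ∀ X Y : V, ⟪φ X, φ Y⟫ = ⟪X, Y⟫ - ⟪X, ξ⟫ * ⟪Y, ξ⟫)
    (hl : ∀ X : V, l X = (c/4) • (X - ⟪X, ξ⟫ • ξ)
        + ⟪A ξ, ξ⟫ • A X - ⟪A X, ξ⟫ • A ξ)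
    (hAξ : A ξ = β • U)
    (hcomm : ∀ X : V, ⟪X, ξ⟫ = 0 → φ (l X) = l (φ X)) :
    β = 0 :=
  stmt_0_general φ A l ξ U c β hU hUξ hAsym hφskew hηφ hφiso hl hAξ hcomm
end

section
/- Let M be a real hypersurface of M₂(c), c ≠ 0, with structure Jacobi operator l satisfying φl = lφ on ker(η). On the open set where α = g(Aξ,ξ) ≠ 0 and β ≠ 0 (with Aξ = αξ + βU, U a unit field in ker(η)), the shape operator satisfies AU = (γ/α − c/(4α) + β²/α)U + βξ and AφU = (γ/α − c/(4α))φU, where γ = g(lU,U). -/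
/-!
Write `A` in the orthonormal frame `{U, φU, ξ}`. Since `Aξ = αξ + βU`, the `ξ`-components of
`AU` and `AφU` are `β` and `0`, and on `ker η` the Jacobi operator pairs as
`⟪lX, Y⟫ = c/4 ⟪X, Y⟫ + α ⟪AX, Y⟫ - β² ⟪X, U⟫ ⟪U, Y⟫`. Pairing `φ(lU) = l(φU)` with `U` and with
`φU`, skew-symmetry of `φ` gives `α ⟪AU, φU⟫ = -α ⟪AU, φU⟫` and its isometry on `ker η` gives
`⟪l(φU), φU⟫ = ⟪lU, U⟫ = γ`. As `α ≠ 0`, the off-diagonal entry vanishes and both diagonal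
entries are determined by `γ`.
-/

open RealInnerProductSpace

section

variable {V : Type*} [NormedAddCommGroup V] [InnerProductSpace ℝ V]

theorem Orthonormal.sum_inner_smul_eq_of_mem_span {ι : Type*} [Fintype ι] {v : ι → V}
    (hv : Orthonormal ℝ v) {x : V} (hx : x ∈ Submodule.span ℝ (Set.range v)) :
    ∑ i, ⟪x, v i⟫ • v i = x := by
  obtain ⟨l, rfl⟩ := (Submodule.mem_span_range_iff_exists_fun ℝ).mp hx
  simp only [hv.inner_left_fintype, conj_trivial]

theorem eq_inner_smul_add_inner_smul_add_inner_smul {u v w x : V}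
    (hon : Orthonormal ℝ ![u, v, w]) (hx : ∃ a b d : ℝ, x = a • u + b • v + d • w) :
    x = ⟪x, u⟫ • u + ⟪x, v⟫ • v + ⟪x, w⟫ • w := by
  obtain ⟨a, b, d, rfl⟩ := hx
  have hmem : a • u + b • v + d • w ∈ Submodule.span ℝ (Set.range ![u, v, w]) :=
    (Submodule.mem_span_range_iff_exists_fun ℝ).mpr ⟨![a, b, d], by simp [Fin.sum_univ_three]⟩
  simpa [Fin.sum_univ_three] using (hon.sum_inner_smul_eq_of_mem_span hmem).symm

theorem inner_self_map_eq_zero_of_skew {φ : V → V} (hφskew : ∀ X Y : V, ⟪X, φ Y⟫ = -⟪φ X, Y⟫)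
    (X : V) : ⟪X, φ X⟫ = 0 := by
  have h := hφskew X X
  rw [real_inner_comm X (φ X)] at h
  linarith

theorem orthonormal_frame {φ : V → V} {ξ U : V} (hξ : ⟪ξ, ξ⟫ = 1) (hU : ⟪U, U⟫ = 1)
    (hUξ : ⟪U, ξ⟫ = 0) (hφskew : ∀ X Y : V, ⟪X, φ Y⟫ = -⟪φ X, Y⟫)
    (hηφ : ∀ X : V, ⟪φ X, ξ⟫ = 0)
    (hφiso : ∀ X Y : V, ⟪φ X, φ Y⟫ = ⟪X, Y⟫ - ⟪X, ξ⟫ * ⟪Y, ξ⟫) :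
    Orthonormal ℝ ![U, φ U, ξ] := by
  have hφU : ⟪φ U, φ U⟫ = 1 := by rw [hφiso, hU, hUξ]; ring
  have unit {x : V} (hx : ⟪x, x⟫ = 1) : ‖x‖ = 1 := by
    rw [norm_eq_sqrt_real_inner, hx, Real.sqrt_one]
  simp only [orthonormal_vecCons_iff]
  refine ⟨unit hU, ?_, unit hφU, ?_, unit hξ, fun i => i.elim0, Orthonormal.of_isEmpty _⟩
  · intro i
    fin_cases i
    exacts [inner_self_map_eq_zero_of_skew hφskew U, hUξ]
  · intro i
    fin_cases i
    exact hηφ U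

theorem inner_jacobi_of_orthogonal {A : V →ₗ[ℝ] V} {l : V → V} {ξ U : V} {c α β : ℝ}
    (hAsym : ∀ X Y : V, ⟪A X, Y⟫ = ⟪X, A Y⟫) (hAξ : A ξ = α • ξ + β • U)
    (hl : ∀ X : V, l X = (c/4) • (X - ⟪X, ξ⟫ • ξ) + α • A X - ⟪A X, ξ⟫ • A ξ)
    {X Y : V} (hX : ⟪X, ξ⟫ = 0) (hY : ⟪Y, ξ⟫ = 0) :
    ⟪l X, Y⟫ = c/4 * ⟪X, Y⟫ + α * ⟪A X, Y⟫ - β^2 * ⟪X, U⟫ * ⟪U, Y⟫ := by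
  have hξY : ⟪ξ, Y⟫ = 0 := by rw [real_inner_comm]; exact hY
  rw [hl, hAsym X ξ, hAξ]
  simp only [inner_sub_left, inner_add_left, inner_add_right, real_inner_smul_left,
    real_inner_smul_right, hX, hξY]
  ring

theorem shape_operator_frame_entries {φ A : V →ₗ[ℝ] V} {l : V → V} {ξ U : V} {c α β : ℝ}
    (hα : α ≠ 0) (hU : ⟪U, U⟫ = 1) (hUξ : ⟪U, ξ⟫ = 0)
    (hφskew : ∀ X Y : V, ⟪X, φ Y⟫ = -⟪φ X, Y⟫) (hηφ : ∀ X : V, ⟪φ X, ξ⟫ = 0)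
    (hφiso : ∀ X Y : V, ⟪φ X, φ Y⟫ = ⟪X, Y⟫ - ⟪X, ξ⟫ * ⟪Y, ξ⟫)
    (hAsym : ∀ X Y : V, ⟪A X, Y⟫ = ⟪X, A Y⟫) (hAξ : A ξ = α • ξ + β • U)
    (hl : ∀ X : V, l X = (c/4) • (X - ⟪X, ξ⟫ • ξ) + α • A X - ⟪A X, ξ⟫ • A ξ)
    (hcomm : φ (l U) = l (φ U)) :
    ⟪A U, φ U⟫ = 0 ∧ α * ⟪A U, U⟫ = ⟪l U, U⟫ - c/4 + β^2 ∧
      α * ⟪A (φ U), φ U⟫ = ⟪l U, U⟫ - c/4 := by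
  have hUφU : ⟪U, φ U⟫ = 0 := inner_self_map_eq_zero_of_skew hφskew U
  have hφUU : ⟪φ U, U⟫ = 0 := by rw [real_inner_comm]; exact hUφU
  have hφU : ⟪φ U, φ U⟫ = 1 := by rw [hφiso, hU, hUξ]; ring
  have jacobi {X Y : V} := inner_jacobi_of_orthogonal (X := X) (Y := Y) hAsym hAξ hl
  have hlUU : ⟪l U, U⟫ = c/4 + α * ⟪A U, U⟫ - β^2 := by rw [jacobi hUξ hUξ, hU]; ring
  have hlUφU : ⟪l U, φ U⟫ = α * ⟪A U, φ U⟫ := by rw [jacobi hUξ (hηφ U), hUφU]; ring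
  have hlφUU : ⟪l (φ U), U⟫ = α * ⟪A U, φ U⟫ := by
    rw [jacobi (hηφ U) hUξ, hφUU, hAsym, real_inner_comm]; ring
  have hlφUφU : ⟪l (φ U), φ U⟫ = c/4 + α * ⟪A (φ U), φ U⟫ := by
    rw [jacobi (hηφ U) (hηφ U), hφU, hφUU]; ring
  have hskew : ⟪l (φ U), U⟫ = -⟪l U, φ U⟫ := by rw [← hcomm, hφskew (l U) U]; ring
  have hiso : ⟪l (φ U), φ U⟫ = ⟪l U, U⟫ := by rw [← hcomm, hφiso, hUξ]; ring
  refine ⟨?_, by linarith, by linarith⟩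
  have hαb : α * ⟪A U, φ U⟫ = 0 := by linarith
  exact (mul_eq_zero.mp hαb).resolve_left hα

end

theorem stmt_1_general {V : Type*} [NormedAddCommGroup V] [InnerProductSpace ℝ V]
    (φ A : V →ₗ[ℝ] V) (l : V → V) (ξ U : V) (c α β γ : ℝ)
    (hα : α ≠ 0)
    (hξ : ⟪ξ, ξ⟫ = 1) (hU : ⟪U, U⟫ = 1) (hUξ : ⟪U, ξ⟫ = 0)
    (hAsym : ∀ X Y : V, ⟪A X, Y⟫ = ⟪X, A Y⟫)
    (hφskew : ∀ X Y : V, ⟪X, φ Y⟫ = -⟪φ X, Y⟫)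
    (hηφ : ∀ X : V, ⟪φ X, ξ⟫ = 0)
    (hφiso : ∀ X Y : V, ⟪φ X, φ Y⟫ = ⟪X, Y⟫ - ⟪X, ξ⟫ * ⟪Y, ξ⟫)
    (hspan : ∀ X : V, ∃ a b d : ℝ, X = a • U + b • φ U + d • ξ)
    (hl : ∀ X : V, l X = (c/4) • (X - ⟪X, ξ⟫ • ξ) + α • A X - ⟪A X, ξ⟫ • A ξ)
    (hAξ : A ξ = α • ξ + β • U)
    (hγ : γ = ⟪l U, U⟫)
    (hcomm : ∀ X : V, ⟪X, ξ⟫ = 0 → φ (l X) = l (φ X)) :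
    A U = (γ/α - c/(4*α) + β^2/α) • U + β • ξ ∧
    A (φ U) = (γ/α - c/(4*α)) • φ U := by
  have hframe := orthonormal_frame hξ hU hUξ hφskew hηφ hφiso
  have expand (X : V) := eq_inner_smul_add_inner_smul_add_inner_smul hframe (hspan X)
  obtain ⟨hb, ha, hq⟩ := shape_operator_frame_entries hα hU hUξ hφskew hηφ hφiso hAsym hAξ hl
    (hcomm U hUξ)
  rw [← hγ] at ha hq
  have hAUξ : ⟪A U, ξ⟫ = β := by
    rw [hAsym, hAξ, inner_add_right, real_inner_smul_right, real_inner_smul_right, hU, hUξ]; ring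
  have hAφUξ : ⟪A (φ U), ξ⟫ = 0 := by
    rw [hAsym, hAξ, inner_add_right, real_inner_smul_right, real_inner_smul_right, hηφ,
      real_inner_comm, inner_self_map_eq_zero_of_skew hφskew U]; ring
  have hAφUU : ⟪A (φ U), U⟫ = 0 := by rw [hAsym, real_inner_comm]; exact hb
  constructor
  · rw [expand (A U), hb, hAUξ, zero_smul, add_zero]
    congr 2
    field_simp
    linarith
  · rw [expand (A (φ U)), hAφUU, hAφUξ, zero_smul, zero_smul, zero_add, add_zero]
    congr 1
    field_simp
    linarith

/-- On the set where α ≠ 0 and β ≠ 0, with φl = lφ on ker(η),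
the shape operator satisfies AU = (γ/α − c/(4α) + β²/α)U + βξ and
AφU = (γ/α − c/(4α))φU, where γ = g(lU,U). -/
theorem stmt_1 {V : Type*} [NormedAddCommGroup V] [InnerProductSpace ℝ V]
    (φ A : V →ₗ[ℝ] V) (l : V → V) (ξ U : V) (c α β γ : ℝ)
    (hc : c ≠ 0) (hα : α ≠ 0) (hβ : β ≠ 0)
    (hξ : ⟪ξ, ξ⟫ = 1) (hU : ⟪U, U⟫ = 1) (hUξ : ⟪U, ξ⟫ = 0)
    (hAsym : ∀ X Y : V, ⟪A X, Y⟫ = ⟪X, A Y⟫)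
    (hφskew : ∀ X Y : V, ⟪X, φ Y⟫ = -⟪φ X, Y⟫)
    (hφξ : φ ξ = 0)
    (hηφ : ∀ X : V, ⟪φ X, ξ⟫ = 0)
    (hφ2 : ∀ X : V, φ (φ X) = -X + ⟪X, ξ⟫ • ξ)
    (hφiso : ∀ X Y : V, ⟪φ X, φ Y⟫ = ⟪X, Y⟫ - ⟪X, ξ⟫ * ⟪Y, ξ⟫)
    (hspan : ∀ X : V, ∃ a b d : ℝ, X = a • U + b • φ U + d • ξ)
    (hαdef : α = ⟪A ξ, ξ⟫)
    (hl : ∀ X : V, l X = (c/4) • (X - ⟪X, ξ⟫ • ξ) + α • A X - ⟪A X, ξ⟫ • A ξ)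
    (hAξ : A ξ = α • ξ + β • U)
    (hγ : γ = ⟪l U, U⟫)
    (hcomm : ∀ X : V, ⟪X, ξ⟫ = 0 → φ (l X) = l (φ X)) :
    A U = (γ/α - c/(4*α) + β^2/α) • U + β • ξ ∧
    A (φ U) = (γ/α - c/(4*α)) • φ U :=
  stmt_1_general φ A l ξ U c α β γ hα hξ hU hUξ hAsym hφskew hηφ hφiso hspan hl hAξ hγ hcomm
end

section
/- Under the frame equations derived from φl = lφ (α ≠ 0, β ≠ 0), the Codazzi equation (∇_U A)ξ − (∇_ξ A)U = −(c/4)φU implies the three scalar equations: (Uα) = (ξβ); (Uβ) = ξ(γ/α − c/(4α) + β²/α); and γ + κ₂β − (γ/α − c/(4α))(γ/α − c/(4α) + β²/α) − κ₁β²/α = 0. -/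
/-! Since `A (φU)` is a multiple of `φU`, the Codazzi equation collapses to a linear relation
among `U`, `φU`, `ξ` whose three coefficients are exactly the differences of the two sides of
the claimed equations (clearing `α` in the `φU`-coefficient); linear independence makes them
vanish. -/

lemma LinearIndependent.eq_zero_of_triple {R M : Type*} [Semiring R] [AddCommMonoid M]
    [Module R M] {x y z : M} (h : LinearIndependent R ![x, y, z]) {r s t : R}
    (h' : r • x + s • y + t • z = 0) : r = 0 ∧ s = 0 ∧ t = 0 := by
  replace h := @h (.single 0 r + .single 1 s + .single 2 t) 0 (by simpa [← add_assoc])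
  exact ⟨by simpa using congr($h 0), by simpa using congr($h 1), by simpa using congr($h 2)⟩

theorem stmt_5_general {V : Type*} [AddCommGroup V] [Module ℝ V]
    (A : V →ₗ[ℝ] V) (u w x : V) (c α β γ κ₁ κ₂ uα uβ xβ xe : ℝ)
    (hα : α ≠ 0)
    (hind : LinearIndependent ℝ ![u, w, x])
    (hAw : A w = (γ/α - c/(4*α)) • w)
    -- (∇_U A)ξ − (∇_ξ A)U = −(c/4)φU, with ∇_U(Aξ), ∇_ξ(AU) expanded by Leibniz
    (hCodazzi :
      ((uα • x + α • ((γ/α - c/(4*α) + β^2/α) • w) + uβ • u + β • (κ₂ • w))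
        - A ((γ/α - c/(4*α) + β^2/α) • w))
      - ((xe • u + (γ/α - c/(4*α) + β^2/α) • (κ₁ • w) + xβ • x + β • (β • w))
        - A (κ₁ • w))
      = -((c/4) • w)) :
    uα = xβ ∧ uβ = xe ∧
    γ + κ₂ * β - (γ/α - c/(4*α)) * (γ/α - c/(4*α) + β^2/α) - κ₁ * β^2/α = 0 := by
  rw [map_smul, map_smul, hAw] at hCodazzi
  have hframe : (uβ - xe) • u +
      (γ + κ₂ * β - (γ/α - c/(4*α)) * (γ/α - c/(4*α) + β^2/α) - κ₁ * β^2/α) • w +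
      (uα - xβ) • x = 0 := by
    linear_combination (norm := match_scalars <;> field_simp <;> ring) hCodazzi
  obtain ⟨hU, hφU, hξ⟩ := hind.eq_zero_of_triple hframe
  exact ⟨sub_eq_zero.mp hξ, sub_eq_zero.mp hU, hφU⟩

/-- The Codazzi equation (∇_U A)ξ − (∇_ξ A)U = −(c/4)φU, expanded
in the frame {U, φU, ξ} (here u, w, x) with the Leibniz rule, implies
(2.15) Uα = ξβ, (2.16) Uβ = ξ(γ/α − c/(4α) + β²/α), and
(2.17) γ + κ₂β − (γ/α − c/(4α))(γ/α − c/(4α) + β²/α) − κ₁β²/α = 0.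
Here uα, uβ, xβ, xe denote Uα, Uβ, ξβ, ξ(γ/α − c/(4α) + β²/α). -/
theorem stmt_5 {V : Type*} [AddCommGroup V] [Module ℝ V]
    (A : V →ₗ[ℝ] V) (u w x : V) (c α β γ κ₁ κ₂ uα uβ xβ xe : ℝ)
    (hc : c ≠ 0) (hα : α ≠ 0) (hβ : β ≠ 0)
    (hind : LinearIndependent ℝ ![u, w, x])
    (hAx : A x = α • x + β • u)
    (hAu : A u = (γ/α - c/(4*α) + β^2/α) • u + β • x)
    (hAw : A w = (γ/α - c/(4*α)) • w)
    -- (∇_U A)ξ − (∇_ξ A)U = −(c/4)φU, with ∇_U(Aξ), ∇_ξ(AU) expanded by Leibniz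
    (hCodazzi :
      ((uα • x + α • ((γ/α - c/(4*α) + β^2/α) • w) + uβ • u + β • (κ₂ • w))
        - A ((γ/α - c/(4*α) + β^2/α) • w))
      - ((xe • u + (γ/α - c/(4*α) + β^2/α) • (κ₁ • w) + xβ • x + β • (β • w))
        - A (κ₁ • w))
      = -((c/4) • w)) :
    uα = xβ ∧ uβ = xe ∧
    γ + κ₂ * β - (γ/α - c/(4*α)) * (γ/α - c/(4*α) + β^2/α) - κ₁ * β^2/α = 0 :=
  stmt_5_general A u w x c α β γ κ₁ κ₂ uα uβ xβ xe hα hind hAw hCodazzi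
end

section
/- Under the same frame equations, the Codazzi equation (∇_{φU} A)ξ − (∇_ξ A)φU = (c/4)U implies: (φUβ) + (γ/α − c/(4α))(γ/α − c/(4α) + β²/α) − κ₁β²/α − β² − γ = 0; κ₃β = ξ(γ/α − c/(4α)); and (φUα) + 3β(γ/α − c/(4α)) − κ₁β − αβ = 0. -/
/-!
Expanding both sides of the Codazzi equation in the frame `{U, φU, ξ}` with the given shape
operator, the equation becomes a linear relation among `U`, `φU`, `ξ`; by linear independence
its three coefficients vanish, and these are the three claimed identities once
`α (γ/α − c/(4α)) + c/4 = γ` is used in the `U`-coefficient.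
-/

theorem LinearIndependent.eq_zero_of_smul_add_smul_add_smul_eq_zero {R M : Type*} [Ring R]
    [AddCommGroup M] [Module R M] {u w x : M} (hind : LinearIndependent R ![u, w, x])
    {a b d : R} (h : a • u + b • w + d • x = 0) : a = 0 ∧ b = 0 ∧ d = 0 := by
  have hcoeff := Fintype.linearIndependent_iff.mp hind ![a, b, d]
    (by simpa [Fin.sum_univ_three] using h)
  exact ⟨hcoeff 0, hcoeff 1, hcoeff 2⟩

theorem stmt_6_general {V : Type*} [AddCommGroup V] [Module ℝ V]
    (A : V →ₗ[ℝ] V) (u w x : V) (c α β γ κ₁ κ₃ wα wβ xf : ℝ)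
    (hα : α ≠ 0)
    (hind : LinearIndependent ℝ ![u, w, x])
    (hAx : A x = α • x + β • u)
    (hAu : A u = (γ/α - c/(4*α) + β^2/α) • u + β • x)
    (hCodazzi :
      ((wα • x + α • (-((γ/α - c/(4*α)) • u)) + wβ • u
          + β • (κ₃ • w + (γ/α - c/(4*α)) • x))
        - A (-((γ/α - c/(4*α)) • u)))
      - ((xf • w + (γ/α - c/(4*α)) • (-(κ₁ • u) - β • x))
        - A (-(κ₁ • u) - β • x))
      = (c/4) • u) :
    wβ + (γ/α - c/(4*α)) * (γ/α - c/(4*α) + β^2/α) - κ₁ * β^2/α - β^2 - γ = 0 ∧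
    κ₃ * β = xf ∧
    wα + 3*β*(γ/α - c/(4*α)) - κ₁*β - α*β = 0 := by
  set f := γ/α - c/(4*α) with hf
  have hγ : α * f + c/4 = γ := by rw [hf]; field_simp; ring
  have hframe : (wβ + f*(f + β^2/α) - κ₁*β^2/α - β^2 - (α*f + c/4)) • u
      + (κ₃*β - xf) • w + (wα + 3*β*f - κ₁*β - α*β) • x = 0 := by
    simp only [map_neg, map_sub, map_smul, hAu, hAx] at hCodazzi
    linear_combination (norm := module) hCodazzi
  obtain ⟨hU, hφU, hξ⟩ := hind.eq_zero_of_smul_add_smul_add_smul_eq_zero hframe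
  rw [hγ] at hU
  exact ⟨hU, sub_eq_zero.mp hφU, hξ⟩

/-- The Codazzi equation (∇_{φU} A)ξ − (∇_ξ A)φU = (c/4)U, expanded
in the frame {U, φU, ξ} (here u, w, x), implies
(2.18) φUβ + (γ/α − c/(4α))(γ/α − c/(4α) + β²/α) − κ₁β²/α − β² − γ = 0,
(2.19) κ₃β = ξ(γ/α − c/(4α)), and
(2.20) φUα + 3β(γ/α − c/(4α)) − κ₁β − αβ = 0.
Here wα, wβ, xf denote φUα, φUβ, ξ(γ/α − c/(4α)). -/
theorem stmt_6 {V : Type*} [AddCommGroup V] [Module ℝ V]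
    (A : V →ₗ[ℝ] V) (u w x : V) (c α β γ κ₁ κ₃ wα wβ xf : ℝ)
    (hc : c ≠ 0) (hα : α ≠ 0) (hβ : β ≠ 0)
    (hind : LinearIndependent ℝ ![u, w, x])
    (hAx : A x = α • x + β • u)
    (hAu : A u = (γ/α - c/(4*α) + β^2/α) • u + β • x)
    (hAw : A w = (γ/α - c/(4*α)) • w)
    (hCodazzi :
      ((wα • x + α • (-((γ/α - c/(4*α)) • u)) + wβ • u
          + β • (κ₃ • w + (γ/α - c/(4*α)) • x))
        - A (-((γ/α - c/(4*α)) • u)))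
      - ((xf • w + (γ/α - c/(4*α)) • (-(κ₁ • u) - β • x))
        - A (-(κ₁ • u) - β • x))
      = (c/4) • u) :
    wβ + (γ/α - c/(4*α)) * (γ/α - c/(4*α) + β^2/α) - κ₁ * β^2/α - β^2 - γ = 0 ∧
    κ₃ * β = xf ∧
    wα + 3*β*(γ/α - c/(4*α)) - κ₁*β - α*β = 0 :=
  stmt_6_general A u w x c α β γ κ₁ κ₃ wα wβ xf hα hind hAx hAu hCodazzi
end

section
/- Under the same frame equations, the Codazzi equation (∇_U A)φU − (∇_{φU} A)U = −(c/2)ξ implies: −κ₂β²/α − 3β(γ/α − c/(4α)) − β³/α + φU(γ/α − c/(4α) + β²/α) = 0 and U(γ/α − c/(4α)) = κ₃β²/α. -/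
lemma LinearIndependent.eq_zero_of_triple_s7 {R M : Type*} [Ring R] [AddCommGroup M] [Module R M]
    {u w x : M} (h : LinearIndependent R ![u, w, x]) {a b c : R}
    (h' : a • u + b • w + c • x = 0) : a = 0 ∧ b = 0 ∧ c = 0 := by
  have hcoeffs := Fintype.linearIndependent_iff.mp h ![a, b, c]
    (by simpa [Fin.sum_univ_three] using h')
  exact ⟨hcoeffs 0, hcoeffs 1, hcoeffs 2⟩

/-- Here `u, w, x` stand for `U, φU, ξ`, and `f`, `g` for the principal curvatures
`γ/α − c/(4α)` and `γ/α − c/(4α) + β²/α`. -/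
lemma codazzi_U_phiU_components {R V : Type*} [CommRing R] [AddCommGroup V] [Module R V]
    (A : V →ₗ[R] V) (u w x : V) (k α β f g κ₂ κ₃ uf we wβ : R)
    (hind : LinearIndependent R ![u, w, x])
    (hAx : A x = α • x + β • u) (hAu : A u = g • u + β • x) (hAw : A w = f • w)
    (hCodazzi :
      ((uf • w + f • (-(κ₂ • u) - g • x)) - A (-(κ₂ • u) - g • x))
        - ((we • u + g • (κ₃ • w + f • x) + wβ • x + β • (-(f • u))) - A (κ₃ • w + f • x))
      = -(k • x)) :
    we = κ₂ * (g - f) + β * (g + 2 * f) ∧ uf = κ₃ * (g - f) := by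
  simp only [map_sub, map_add, map_neg, map_smul, hAx, hAu, hAw] at hCodazzi
  obtain ⟨hU, hφU, -⟩ := hind.eq_zero_of_triple_s7
    (a := κ₂ * (g - f) + β * (g + 2 * f) - we) (b := uf - κ₃ * (g - f))
    (c := κ₂ * β + (g + f) * α - 2 * f * g - wβ + k)
    (by linear_combination (norm := module) hCodazzi)
  exact ⟨(sub_eq_zero.mp hU).symm, sub_eq_zero.mp hφU⟩

theorem stmt_7_general {V : Type*} [AddCommGroup V] [Module ℝ V]
    (A : V →ₗ[ℝ] V) (u w x : V) (c α β γ κ₂ κ₃ uf we wβ : ℝ)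
    (hind : LinearIndependent ℝ ![u, w, x])
    (hAx : A x = α • x + β • u)
    (hAu : A u = (γ/α - c/(4*α) + β^2/α) • u + β • x)
    (hAw : A w = (γ/α - c/(4*α)) • w)
    (hCodazzi :
      ((uf • w + (γ/α - c/(4*α)) • (-(κ₂ • u) - (γ/α - c/(4*α) + β^2/α) • x))
        - A (-(κ₂ • u) - (γ/α - c/(4*α) + β^2/α) • x))
      - ((we • u + (γ/α - c/(4*α) + β^2/α) • (κ₃ • w + (γ/α - c/(4*α)) • x)
          + wβ • x + β • (-((γ/α - c/(4*α)) • u)))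
        - A (κ₃ • w + (γ/α - c/(4*α)) • x))
      = -((c/2) • x)) :
    -(κ₂ * β^2/α) - 3*β*(γ/α - c/(4*α)) - β^3/α + we = 0 ∧
    uf = κ₃ * β^2/α := by
  obtain ⟨hwe, huf⟩ := codazzi_U_phiU_components A u w x (c / 2) α β _ _ κ₂ κ₃ uf we wβ
    hind hAx hAu hAw hCodazzi
  constructor
  · rw [hwe]; ring
  · rw [huf]; ring

/-- The Codazzi equation (∇_U A)φU − (∇_{φU} A)U = −(c/2)ξ, expanded
in the frame {U, φU, ξ} (here u, w, x), implies
(2.21) −κ₂β²/α − 3β(γ/α − c/(4α)) − β³/α + φU(γ/α − c/(4α) + β²/α) = 0 and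
(2.22) U(γ/α − c/(4α)) = κ₃β²/α.
Here uf, we, wβ denote U(γ/α − c/(4α)), φU(γ/α − c/(4α) + β²/α), φUβ. -/
theorem stmt_7 {V : Type*} [AddCommGroup V] [Module ℝ V]
    (A : V →ₗ[ℝ] V) (u w x : V) (c α β γ κ₂ κ₃ uf we wβ : ℝ)
    (hc : c ≠ 0) (hα : α ≠ 0) (hβ : β ≠ 0)
    (hind : LinearIndependent ℝ ![u, w, x])
    (hAx : A x = α • x + β • u)
    (hAu : A u = (γ/α - c/(4*α) + β^2/α) • u + β • x)
    (hAw : A w = (γ/α - c/(4*α)) • w)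
    (hCodazzi :
      ((uf • w + (γ/α - c/(4*α)) • (-(κ₂ • u) - (γ/α - c/(4*α) + β^2/α) • x))
        - A (-(κ₂ • u) - (γ/α - c/(4*α) + β^2/α) • x))
      - ((we • u + (γ/α - c/(4*α) + β^2/α) • (κ₃ • w + (γ/α - c/(4*α)) • x)
          + wβ • x + β • (-((γ/α - c/(4*α)) • u)))
        - A (κ₃ • w + (γ/α - c/(4*α)) • x))
      = -((c/2) • x)) :
    -(κ₂ * β^2/α) - 3*β*(γ/α - c/(4*α)) - β^3/α + we = 0 ∧
    uf = κ₃ * β^2/α :=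
  stmt_7_general A u w x c α β γ κ₂ κ₃ uf we wβ hind hAx hAu hAw hCodazzi
end

section
/- Suppose on V' (α ≠ 0, β ≠ 0, φl = lφ, ∇_ξ l = μξ on ker(η) or span{ξ}) we have γ = 0. Then κ₁ = −4α, φUβ = −c²/(16α²) + cβ²/(4α²) − 3β², and φUα = −3αβ + 3βc/(4α). -/
/-!
With γ = 0 the function γ/α − c/(4α) is −c/(4α), whose φU-derivative is (c/(4α²))·φUα.
Comparing with (2.23) and cancelling c determines φUα; substituting it into (2.20), the
c-terms cancel and dividing by β gives κ₁ = −4α; (2.18) then yields φUβ.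
-/

lemma phiU_alpha_eq {c α β wα wf : ℝ} (hc : c ≠ 0) (hα : α ≠ 0)
    (h23 : wf = (3*β/α) * ((-(c/(4*α)))^2 - c/4)) (hLeib : wf = (c/(4*α^2)) * wα) :
    wα = -3*α*β + 3*β*c/(4*α) := by
  have hc' : c / (4*α^2) ≠ 0 := by positivity
  apply mul_left_cancel₀ hc'
  rw [← hLeib, h23]
  field_simp
  ring

lemma kappa_eq {c α β κ₁ wα : ℝ} (hβ : β ≠ 0)
    (h20 : wα + 3*β*(-(c/(4*α))) - κ₁*β - α*β = 0) (hwα : wα = -3*α*β + 3*β*c/(4*α)) :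
    κ₁ = -4*α := by
  apply mul_right_cancel₀ hβ
  linear_combination -h20 + hwα

lemma phiU_beta_eq {c α β wβ : ℝ} (hα : α ≠ 0)
    (h18 : wβ + (-(c/(4*α))) * (-(c/(4*α)) + β^2/α) - (-4*α) * β^2/α - β^2 = 0) :
    wβ = -(c^2/(16*α^2)) + c*β^2/(4*α^2) - 3*β^2 := by
  field_simp at h18 ⊢
  linear_combination 4 * h18

/-- On V' with γ = 0, equations (2.20), (2.23), (2.18) together
with the chain rule φU(γ/α − c/(4α)) = (c/(4α²))·φUα (valid since γ = 0) give
κ₁ = −4α, φUβ = −c²/(16α²) + cβ²/(4α²) − 3β², and φUα = −3αβ + 3βc/(4α).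
Here wα, wβ, wf denote φUα, φUβ, φU(γ/α − c/(4α)). -/
theorem stmt_10 (c α β γ κ₁ wα wβ wf : ℝ)
    (hc : c ≠ 0) (hα : α ≠ 0) (hβ : β ≠ 0)
    (hγ : γ = 0)
    (h20 : wα + 3*β*(γ/α - c/(4*α)) - κ₁*β - α*β = 0)
    (h23 : wf = (3*β/α) * ((γ/α - c/(4*α))^2 - c/4))
    (h18 : wβ + (γ/α - c/(4*α)) * (γ/α - c/(4*α) + β^2/α) - κ₁ * β^2/α - β^2 - γ = 0)
    (hLeib : wf = (c/(4*α^2)) * wα) :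
    κ₁ = -4*α ∧
    wβ = -(c^2/(16*α^2)) + c*β^2/(4*α^2) - 3*β^2 ∧
    wα = -3*α*β + 3*β*c/(4*α) := by
  subst hγ
  simp only [zero_div, zero_sub, sub_zero] at h20 h23 h18
  have hwα := phiU_alpha_eq hc hα h23 hLeib
  have hκ := kappa_eq hβ h20 hwα
  subst hκ
  exact ⟨rfl, phiU_beta_eq hα h18, hwα⟩
end

section
/- Algebraic kernel of Lemma 3.1/4.1: under the frame relations with α ≠ 0, β ≠ 0, if ∇_ξ l = μξ holds on ker(η) (i.e. (∇_ξ l)U = μξ and (∇_ξ l)φU = μξ), then μ + βγ = 0 and μ = 0, hence γ = 0. -/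
/-! Since `l` acts as `γ` on both `U` and `φU` and kills `ξ`, the `φU`-terms of `(∇_ξ l)U` cancel
and its `ξ`-component is `-μ`, while the `ξ`-component of `(∇_ξ l)φU` is `-(μ + βγ)`; linear
independence of the frame forces both to vanish, and `β ≠ 0` then gives `γ = 0`. -/

theorem LinearIndependent.eq_zero_of_smul_add_smul_add_smul {R M : Type*} [Ring R]
    [AddCommGroup M] [Module R M] {u w x : M} (h : LinearIndependent R ![u, w, x])
    {a b c : R} (habc : a • u + b • w + c • x = 0) : a = 0 ∧ b = 0 ∧ c = 0 := by
  have hcoeff := Fintype.linearIndependent_iff.mp h ![a, b, c]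
    (by simpa [Fin.sum_univ_three, add_assoc] using habc)
  exact ⟨hcoeff 0, hcoeff 1, hcoeff 2⟩

theorem stmt_15_general {V : Type*} [AddCommGroup V] [Module ℝ V]
    (l : V →ₗ[ℝ] V) (u w x : V) (β γ κ₁ μ ξγ : ℝ)
    (hβ : β ≠ 0)
    (hind : LinearIndependent ℝ ![u, w, x])
    (hlu : l u = γ • u) (hlw : l w = γ • w) (hlx : l x = 0)
    -- (∇_ξ l)U = ∇_ξ(lU) − l(∇_ξU) = μξ
    (h1 : (ξγ • u + γ • (κ₁ • w)) - l (κ₁ • w) = μ • x)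
    -- (∇_ξ l)φU = ∇_ξ(lφU) − l(∇_ξφU) = μξ
    (h2 : (ξγ • w + γ • (-(κ₁ • u) - β • x)) - l (-(κ₁ • u) - β • x) = μ • x) :
    μ + β * γ = 0 ∧ μ = 0 ∧ γ = 0 := by
  rw [map_smul, hlw] at h1
  rw [map_sub, map_neg, map_smul, map_smul, hlu, hlx] at h2
  obtain ⟨-, -, hμ⟩ := hind.eq_zero_of_smul_add_smul_add_smul (a := ξγ) (b := 0) (c := -μ)
    (by linear_combination (norm := module) h1)
  obtain ⟨-, -, hμβγ⟩ := hind.eq_zero_of_smul_add_smul_add_smul (a := 0) (b := ξγ)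
    (c := -(μ + β * γ)) (by linear_combination (norm := module) h2)
  rw [neg_eq_zero] at hμ hμβγ
  have hγ : γ = 0 := by
    rw [hμ, zero_add] at hμβγ
    exact (mul_eq_zero.mp hμβγ).resolve_left hβ
  exact ⟨hμβγ, hμ, hγ⟩

/-- kernel of Lemma 3.1: in the frame {U, φU, ξ} (here u, w, x),
with lU = γU, lφU = γφU, lξ = 0 and the connection formulas ∇_ξU = κ₁φU,
∇_ξφU = −κ₁U − βξ, if (∇_ξ l)U = μξ and (∇_ξ l)φU = μξ (Leibniz-expanded,
ξγ denoting the ξ-derivative of γ), then μ + βγ = 0, μ = 0, hence γ = 0. -/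
theorem stmt_15 {V : Type*} [AddCommGroup V] [Module ℝ V]
    (l : V →ₗ[ℝ] V) (u w x : V) (c α β γ κ₁ μ ξγ : ℝ)
    (hc : c ≠ 0) (hα : α ≠ 0) (hβ : β ≠ 0)
    (hind : LinearIndependent ℝ ![u, w, x])
    (hlu : l u = γ • u) (hlw : l w = γ • w) (hlx : l x = 0)
    -- (∇_ξ l)U = ∇_ξ(lU) − l(∇_ξU) = μξ
    (h1 : (ξγ • u + γ • (κ₁ • w)) - l (κ₁ • w) = μ • x)
    -- (∇_ξ l)φU = ∇_ξ(lφU) − l(∇_ξφU) = μξ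
    (h2 : (ξγ • w + γ • (-(κ₁ • u) - β • x)) - l (-(κ₁ • u) - β • x) = μ • x) :
    μ + β * γ = 0 ∧ μ = 0 ∧ γ = 0 :=
  stmt_15_general l u w x β γ κ₁ μ ξγ hβ hind hlu hlw hlx h1 h2
end

section
/- Algebraic kernel of Lemma 4.1: under the frame relations with α ≠ 0, β ≠ 0, if lAU = AlU (commutation of l and A evaluated at U), then γ = g(lU,U) = 0. Similarly, lAξ = Alξ also implies γ = 0. -/
/-- kernel of Lemma 4.1: in the frame {U, φU, ξ} (here u, w, x)
with lU = γU, lφU = γφU, lξ = 0 and the shape operator formulas, each of the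
commutation conditions lAU = AlU and lAξ = Alξ forces γ = 0. -/
theorem stmt_16 {V : Type*} [AddCommGroup V] [Module ℝ V]
    (l A : V →ₗ[ℝ] V) (u w x : V) (c α β γ : ℝ)
    (hc : c ≠ 0) (hα : α ≠ 0) (hβ : β ≠ 0)
    (hind : LinearIndependent ℝ ![u, w, x])
    (hlu : l u = γ • u) (hlw : l w = γ • w) (hlx : l x = 0)
    (hAu : A u = (γ/α - c/(4*α) + β^2/α) • u + β • x)
    (hAw : A w = (γ/α - c/(4*α)) • w)
    (hAx : A x = α • x + β • u) :
    (l (A u) = A (l u) → γ = 0) ∧ (l (A x) = A (l x) → γ = 0) := by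
  have hu : u ≠ 0 := by simpa using hind.ne_zero 0
  have hx : x ≠ 0 := by simpa using hind.ne_zero 2
  constructor
  · intro h
    rw [hAu, map_add, map_smul, map_smul, hlu, hlx, map_smul, hAu] at h
    have h2 : (γ * β) • x = 0 := by
      have h3 : (γ / α - c / (4 * α) + β ^ 2 / α) • γ • u + β • (0 : V)
          = γ • ((γ / α - c / (4 * α) + β ^ 2 / α) • u + β • x) := h
      rw [smul_zero, add_zero, smul_add, smul_smul, smul_smul, smul_smul,
        mul_comm γ] at h3
      exact (left_eq_add).mp h3
    rcases smul_eq_zero.mp h2 with h4 | h4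
    · exact (mul_eq_zero.mp h4).resolve_right hβ
    · exact absurd h4 hx
  · intro h
    rw [hAx, map_add, map_smul, map_smul, hlx, hlu, map_zero] at h
    have h2 : (β * γ) • u = 0 := by
      rw [smul_zero, zero_add, smul_smul] at h; exact h
    rcases smul_eq_zero.mp h2 with h4 | h4
    · exact (mul_eq_zero.mp h4).resolve_left hβ
    · exact absurd h4 hu
end
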